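/- arXiv:1509.04904 — 2 statements merged into one kernel-verified Lean document; each statement's English description precedes it below -/
import Mathlib

section
/- Let Ω be a standard Borel probability space and let A, e1, e2 be real-valued random variables on Ω that are jointly independent. Let α, β be real constants and define B = α*A + e1 and C = β*B + e2. Then A and C are conditionally independent given B (the chain a → b → c is d-separated by conditioning on b). -/
open MeasureTheory ProbabilityTheory

section Aux

variable {Ω : Type*} [mΩ : MeasurableSpace Ω]

lemma comap_pair_eq (f g : Ω → ℝ) :
    MeasurableSpace.comap (fun ω => (f ω, g ω)) inferInstance =
      MeasurableSpace.comap f inferInstance ⊔ MeasurableSpace.comap g inferInstance := by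
  have h : (inferInstance : MeasurableSpace (ℝ × ℝ)) =
      MeasurableSpace.comap (Prod.fst : ℝ × ℝ → ℝ) inferInstance ⊔
        MeasurableSpace.comap (Prod.snd : ℝ × ℝ → ℝ) inferInstance := rfl
  rw [h, MeasurableSpace.comap_sup, MeasurableSpace.comap_comp, MeasurableSpace.comap_comp]
  rfl

/-- Key conditional expectation computation: if `(X, Y)` is independent of `Z`, then
`E[1_{X⁻¹s ∩ Y⁻¹u ∩ Z⁻¹v} | σ(Y)] = 1_{Y⁻¹u} · μ(Z⁻¹v) · E[1_{X⁻¹s} | σ(Y)]`. -/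
lemma condexp_triple_indep (μ : Measure Ω) [IsProbabilityMeasure μ]
    (X Y Z : Ω → ℝ) (hX : Measurable X) (hY : Measurable Y) (hZ : Measurable Z)
    (h : IndepFun (fun ω => (X ω, Y ω)) Z μ)
    {s u v : Set ℝ} (hs : MeasurableSet s) (hu : MeasurableSet u) (hv : MeasurableSet v) :
    (μ⟦X ⁻¹' s ∩ Y ⁻¹' u ∩ Z ⁻¹' v | MeasurableSpace.comap Y inferInstance⟧) =ᵐ[μ]
      fun ω => Set.indicator (Y ⁻¹' u) (fun _ => (μ (Z ⁻¹' v)).toReal) ω *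
        (μ⟦X ⁻¹' s | MeasurableSpace.comap Y inferInstance⟧) ω := by
  have hm' : MeasurableSpace.comap Y inferInstance ≤ mΩ := hY.comap_le
  set c : ℝ := (μ (Z ⁻¹' v)).toReal with hc
  have huY : MeasurableSet[MeasurableSpace.comap Y inferInstance] (Y ⁻¹' u) := ⟨u, hu, rfl⟩
  have hfint : Integrable ((X ⁻¹' s ∩ Y ⁻¹' u ∩ Z ⁻¹' v).indicator
      (fun _ => (1 : ℝ))) μ :=
    (integrable_const 1).indicator (((hX hs).inter (hY hu)).inter (hZ hv))
  have hsint : Integrable ((X ⁻¹' s).indicator (fun _ => (1 : ℝ))) μ :=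
    (integrable_const 1).indicator (hX hs)
  -- the candidate for the conditional expectation
  set g : Ω → ℝ := (Y ⁻¹' u).indicator
      (fun ω => c * (μ⟦X ⁻¹' s | MeasurableSpace.comap Y inferInstance⟧) ω) with hg
  have hkey : g =ᵐ[μ] μ⟦X ⁻¹' s ∩ Y ⁻¹' u ∩ Z ⁻¹' v | MeasurableSpace.comap Y inferInstance⟧ := by
    refine ae_eq_condExp_of_forall_setIntegral_eq hm' hfint
      (fun U _ _ => ((integrable_condExp.const_mul c).indicator (hm' _ huY)).integrableOn)
      ?_ ?_
    · rintro U ⟨w, hw, rfl⟩ -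
      have hUm' : MeasurableSet[MeasurableSpace.comap Y inferInstance] (Y ⁻¹' w ∩ Y ⁻¹' u) :=
        ⟨w ∩ u, hw.inter hu, by rw [Set.preimage_inter]⟩
      have hUmΩ : MeasurableSet (Y ⁻¹' w ∩ Y ⁻¹' u) := hm' _ hUm'
      have h1 : ∫ x in Y ⁻¹' w, g x ∂μ
          = c * (μ (X ⁻¹' s ∩ (Y ⁻¹' w ∩ Y ⁻¹' u))).toReal := by
        rw [hg, setIntegral_indicator (hY hu), integral_const_mul,
          setIntegral_condExp hm' hsint hUm']
        congr 1
        rw [integral_indicator (hX hs), Measure.restrict_restrict (hX hs),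
          setIntegral_const, smul_eq_mul, mul_one, Measure.real]
      have h2 : ∫ x in Y ⁻¹' w, (X ⁻¹' s ∩ Y ⁻¹' u ∩ Z ⁻¹' v).indicator
          (fun _ => (1 : ℝ)) x ∂μ
          = (μ (X ⁻¹' s ∩ Y ⁻¹' u ∩ Z ⁻¹' v ∩ Y ⁻¹' w)).toReal := by
        rw [integral_indicator (((hX hs).inter (hY hu)).inter (hZ hv)),
          Measure.restrict_restrict (((hX hs).inter (hY hu)).inter (hZ hv)),
          setIntegral_const, smul_eq_mul, mul_one, Measure.real]
      rw [h1, h2]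
      have hset1 : X ⁻¹' s ∩ (Y ⁻¹' w ∩ Y ⁻¹' u)
          = (fun ω => (X ω, Y ω)) ⁻¹' (s ×ˢ (u ∩ w)) := by
        rw [Set.mk_preimage_prod, Set.preimage_inter]
        ext ω; simp only [Set.mem_inter_iff]; tauto
      have hset2 : X ⁻¹' s ∩ Y ⁻¹' u ∩ Z ⁻¹' v ∩ Y ⁻¹' w
          = ((fun ω => (X ω, Y ω)) ⁻¹' (s ×ˢ (u ∩ w))) ∩ Z ⁻¹' v := by
        rw [Set.mk_preimage_prod, Set.preimage_inter]
        ext ω; simp only [Set.mem_inter_iff]; tauto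
      rw [hset1, hset2,
        h.measure_inter_preimage_eq_mul _ _ (hs.prod (hu.inter hw)) hv,
        ENNReal.toReal_mul, hc]
      ring
    · exact StronglyMeasurable.aestronglyMeasurable
        ((stronglyMeasurable_const.mul stronglyMeasurable_condExp).indicator huY)
  refine hkey.symm.trans (Filter.EventuallyEq.of_eq (funext fun ω => ?_))
  by_cases hω : ω ∈ Y ⁻¹' u
  · simp [hg, Set.indicator_of_mem hω]
  · simp [hg, Set.indicator_of_notMem hω]

/-- If `(X, Y)` is independent of `Z`, then `σ(X)` is conditionally independent of
`σ(Y) ⊔ σ(Z)` given `σ(Y)`. -/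
lemma condIndep_comap_sup_of_indepFun [StandardBorelSpace Ω]
    (μ : Measure Ω) [IsProbabilityMeasure μ]
    (X Y Z : Ω → ℝ) (hX : Measurable X) (hY : Measurable Y) (hZ : Measurable Z)
    (h : IndepFun (fun ω => (X ω, Y ω)) Z μ) (hm' : MeasurableSpace.comap Y inferInstance ≤ mΩ) :
    CondIndep (MeasurableSpace.comap Y inferInstance)
      (MeasurableSpace.comap X inferInstance)
      (MeasurableSpace.comap Y inferInstance ⊔ MeasurableSpace.comap Z inferInstance)
      hm' μ := by
  set P : Ω → ℝ × ℝ := fun ω => (Y ω, Z ω) with hP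
  set p1 : Set (Set Ω) := Set.preimage X '' {s : Set ℝ | MeasurableSet s} with hp1
  set p2 : Set (Set Ω) := Set.preimage P ''
      Set.image2 (· ×ˢ ·) {s : Set ℝ | MeasurableSet s} {t : Set ℝ | MeasurableSet t} with hp2
  have hgen1 : MeasurableSpace.comap X inferInstance = MeasurableSpace.generateFrom p1 := by
    conv_lhs => rw [show (inferInstance : MeasurableSpace ℝ)
      = MeasurableSpace.generateFrom {s : Set ℝ | MeasurableSet s}
      from MeasurableSpace.generateFrom_measurableSet.symm]
    rw [MeasurableSpace.comap_generateFrom]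
  have hgen2 : MeasurableSpace.comap Y inferInstance ⊔ MeasurableSpace.comap Z inferInstance
      = MeasurableSpace.generateFrom p2 := by
    rw [← comap_pair_eq Y Z]
    conv_lhs => rw [show (inferInstance : MeasurableSpace (ℝ × ℝ))
      = MeasurableSpace.generateFrom (Set.image2 (· ×ˢ ·)
          {s : Set ℝ | MeasurableSet s} {t : Set ℝ | MeasurableSet t})
      from generateFrom_prod.symm]
    rw [MeasurableSpace.comap_generateFrom]
  have hp1m : ∀ t ∈ p1, MeasurableSet t := by
    rintro t ⟨s, hs, rfl⟩; exact hX hs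
  have hp2m : ∀ t ∈ p2, MeasurableSet t := by
    rintro t ⟨r, ⟨s, hs, w, hw, rfl⟩, rfl⟩
    rw [Set.mk_preimage_prod]
    exact (hY hs).inter (hZ hw)
  have hsets : CondIndepSets (MeasurableSpace.comap Y inferInstance) hm' p1 p2 μ := by
    rw [condIndepSets_iff _ _ _ _ hp1m hp2m]
    rintro t1 t2 ⟨s, hs, rfl⟩ ⟨r, ⟨u, hu, v, hv, rfl⟩, rfl⟩
    rw [Set.mk_preimage_prod]
    have hL := condexp_triple_indep μ X Y Z hX hY hZ h hs hu hv
    have ht2 : (μ⟦Y ⁻¹' u ∩ Z ⁻¹' v | MeasurableSpace.comap Y inferInstance⟧) =ᵐ[μ]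
        fun ω => Set.indicator (Y ⁻¹' u) (fun _ => (μ (Z ⁻¹' v)).toReal) ω := by
      have hL' := condexp_triple_indep μ X Y Z hX hY hZ h MeasurableSet.univ hu hv
      have hXuniv : X ⁻¹' Set.univ ∩ Y ⁻¹' u ∩ Z ⁻¹' v = Y ⁻¹' u ∩ Z ⁻¹' v := by
        rw [Set.preimage_univ, Set.univ_inter]
      rw [hXuniv] at hL'
      have huniv : (μ⟦X ⁻¹' Set.univ | MeasurableSpace.comap Y inferInstance⟧) =ᵐ[μ] fun _ => (1 : ℝ) := by
        rw [Set.preimage_univ, Set.indicator_univ, condExp_const hm']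
      refine hL'.trans ?_
      filter_upwards [huniv] with ω hω
      rw [hω, mul_one]
    have hinter : X ⁻¹' s ∩ (Y ⁻¹' u ∩ Z ⁻¹' v) = X ⁻¹' s ∩ Y ⁻¹' u ∩ Z ⁻¹' v :=
      (Set.inter_assoc _ _ _).symm
    rw [hinter]
    refine hL.trans ?_
    filter_upwards [ht2] with ω hω
    simp only [Pi.mul_apply, hω]
    ring
  rw [hgen1, hgen2]
  exact hsets.condIndep' hp1m hp2m
    (IsPiSystem.comap MeasurableSpace.isPiSystem_measurableSet X) (IsPiSystem.comap isPiSystem_prod P)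

end Aux

/-- In the causal chain `a → b → c` with linear structural equations
`B = α*A + e1`, `C = β*B + e2`, where `A, e1, e2` are jointly independent,
the nodes `A` and `C` are conditionally independent given `B`:
the chain is d-separated by conditioning on `b`. -/
theorem chain_d_separated_by_middle_node
    {Ω : Type*} [MeasurableSpace Ω] [StandardBorelSpace Ω]
    (μ : Measure Ω) [IsProbabilityMeasure μ]
    (A e1 e2 : Ω → ℝ)
    (hA : Measurable A) (he1 : Measurable e1) (he2 : Measurable e2)
    (hindep : iIndepFun (m := fun _ : Fin 3 => (inferInstance : MeasurableSpace ℝ))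
      ![A, e1, e2] μ)
    (α β : ℝ) (B C : Ω → ℝ)
    (hB : B = fun ω => α * A ω + e1 ω)
    (hC : C = fun ω => β * B ω + e2 ω) :
    CondIndepFun (MeasurableSpace.comap B inferInstance)
      (by subst hB; exact ((measurable_const.mul hA).add he1).comap_le)
      A C μ := by
  subst hC
  subst hB
  set B : Ω → ℝ := fun ω => α * A ω + e1 ω with hBdef
  have hBm : Measurable B := (measurable_const.mul hA).add he1
  have hmeas : ∀ i, Measurable (![A, e1, e2] i) := by
    intro i; fin_cases i <;> simpa
  have hpair : IndepFun (fun ω => (A ω, e1 ω)) e2 μ := by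
    have h := hindep.indepFun_prodMk hmeas 0 1 2 (by decide) (by decide)
    simpa using h
  have hAB : IndepFun (fun ω => (A ω, B ω)) e2 μ := by
    have hφ : Measurable (fun p : ℝ × ℝ => (p.1, α * p.1 + p.2)) := by
      exact measurable_fst.prodMk ((measurable_const.mul measurable_fst).add measurable_snd)
    exact hpair.comp hφ measurable_id
  have hkey := condIndep_comap_sup_of_indepFun μ A B e2 hA hBm he2 hAB hBm.comap_le
  rw [condIndepFun_iff_condIndep]
  refine condIndep_of_condIndep_of_le_right hkey ?_
  -- σ(C) ≤ σ(B) ⊔ σ(e2)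
  have hCcomp : (fun ω => β * B ω + e2 ω)
      = (fun p : ℝ × ℝ => β * p.1 + p.2) ∘ (fun ω => (B ω, e2 ω)) := rfl
  have hφm : Measurable (fun p : ℝ × ℝ => β * p.1 + p.2) :=
    (measurable_const.mul measurable_fst).add measurable_snd
  calc MeasurableSpace.comap (fun ω => β * B ω + e2 ω) inferInstance
      = MeasurableSpace.comap (fun ω => (B ω, e2 ω))
          (MeasurableSpace.comap (fun p : ℝ × ℝ => β * p.1 + p.2) inferInstance) := by
        rw [MeasurableSpace.comap_comp, hCcomp]
    _ ≤ MeasurableSpace.comap (fun ω => (B ω, e2 ω)) inferInstance :=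
        MeasurableSpace.comap_mono hφm.comap_le
    _ = MeasurableSpace.comap B inferInstance ⊔ MeasurableSpace.comap e2 inferInstance :=
        comap_pair_eq B e2
end

section
/- Let Ω be a standard Borel probability space and let B, e1, e2 be real-valued random variables on Ω that are jointly independent. Let α, β be real constants and define A = α*B + e1 and C = β*B + e2. Then A and C are conditionally independent given B (the fork a ← b → c is d-separated by conditioning on b). -/
open MeasureTheory ProbabilityTheory MeasurableSpace Set

/-- Key computation: conditional expectation of the indicator of `B⁻¹ s ∩ e⁻¹ u`
given `σ(B)`, when `e` is independent of `B`. -/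
lemma condexp_indicator_inter_aux
    {Ω : Type*} [mΩ : MeasurableSpace Ω] [StandardBorelSpace Ω]
    (μ : Measure Ω) [IsProbabilityMeasure μ]
    {γ : Type*} [MeasurableSpace γ]
    (B : Ω → ℝ) (e : Ω → γ) (hB : Measurable B) (he : Measurable e)
    (hind : IndepFun e B μ)
    {s : Set ℝ} {u : Set γ} (hs : MeasurableSet s) (hu : MeasurableSet u) :
    (μ⟦B ⁻¹' s ∩ e ⁻¹' u | MeasurableSpace.comap B inferInstance⟧)
      =ᵐ[μ] (B ⁻¹' s).indicator (fun _ => (μ (e ⁻¹' u)).toReal) := by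
  have hm' : MeasurableSpace.comap B inferInstance ≤ mΩ := hB.comap_le
  haveI : SigmaFinite (μ.trim hm') := by
    have : IsFiniteMeasure (μ.trim hm') := isFiniteMeasure_trim hm'
    infer_instance
  have h1 : ((B ⁻¹' s ∩ e ⁻¹' u).indicator (fun _ => (1 : ℝ)))
      = (B ⁻¹' s).indicator ((e ⁻¹' u).indicator (fun _ => (1 : ℝ))) := by
    rw [Set.indicator_indicator]
  calc (μ⟦B ⁻¹' s ∩ e ⁻¹' u | MeasurableSpace.comap B inferInstance⟧)
      = μ[(B ⁻¹' s).indicator ((e ⁻¹' u).indicator (fun _ => (1 : ℝ))) |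
          MeasurableSpace.comap B inferInstance] := by rw [← h1]
    _ =ᵐ[μ] (B ⁻¹' s).indicator
        (μ[((e ⁻¹' u).indicator (fun _ => (1 : ℝ))) |
          MeasurableSpace.comap B inferInstance]) := by
        refine condExp_indicator ?_ ⟨s, hs, rfl⟩
        exact (integrable_const (1 : ℝ)).indicator (he hu)
    _ =ᵐ[μ] (B ⁻¹' s).indicator (fun _ => (μ (e ⁻¹' u)).toReal) := by
        have hcond : (μ[((e ⁻¹' u).indicator (fun _ => (1 : ℝ))) |
            MeasurableSpace.comap B inferInstance])
            =ᵐ[μ] fun _ => μ[((e ⁻¹' u).indicator (fun _ => (1 : ℝ)))] := by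
          refine condExp_indep_eq he.comap_le hm' ?_ ?_
          · exact stronglyMeasurable_const.indicator ⟨u, hu, rfl⟩
          · exact (IndepFun_iff_Indep e B μ).mp hind
        have hint : μ[((e ⁻¹' u).indicator (fun _ => (1 : ℝ)))]
            = (μ (e ⁻¹' u)).toReal := integral_indicator_one (he hu)
        filter_upwards [hcond] with ω hω
        by_cases h : ω ∈ B ⁻¹' s
        · simp only [Set.indicator_of_mem h, hω, hint]
        · simp only [Set.indicator_of_notMem h]

/-- In the causal fork `a ← b → c` with linear structural equations
`A = α*B + e1`, `C = β*B + e2`, where `B, e1, e2` are jointly independent,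
the nodes `A` and `C` are conditionally independent given `B`:
the fork is d-separated by conditioning on `b`. -/
theorem fork_d_separated_by_common_parent
    {Ω : Type*} [MeasurableSpace Ω] [StandardBorelSpace Ω]
    (μ : Measure Ω) [IsProbabilityMeasure μ]
    (B e1 e2 : Ω → ℝ)
    (hB : Measurable B) (he1 : Measurable e1) (he2 : Measurable e2)
    (hindep : iIndepFun (m := fun _ : Fin 3 => (inferInstance : MeasurableSpace ℝ))
      ![B, e1, e2] μ)
    (α β : ℝ) (A C : Ω → ℝ)
    (hA : A = fun ω => α * B ω + e1 ω)
    (hC : C = fun ω => β * B ω + e2 ω) :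
    CondIndepFun (MeasurableSpace.comap B inferInstance)
      hB.comap_le A C μ := by
  have hm' : MeasurableSpace.comap B inferInstance ≤ (inferInstance : MeasurableSpace Ω) := hB.comap_le
  -- measurability of pair maps
  have hP1 : Measurable (fun ω => (B ω, e1 ω)) := hB.prodMk he1
  have hP2 : Measurable (fun ω => (B ω, e2 ω)) := hB.prodMk he2
  -- independence facts extracted from hindep
  have hmeas : ∀ i, Measurable (![B, e1, e2] i) := by
    intro i; fin_cases i <;> simpa
  have hind1 : IndepFun e1 B μ := by
    have := hindep.indepFun (i := 1) (j := 0) (by decide)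
    simpa using this
  have hind12B : IndepFun (fun ω => (e1 ω, e2 ω)) B μ := by
    have := hindep.indepFun_prodMk hmeas 1 2 0 (by decide) (by decide)
    simpa using this
  have hind12 : IndepFun e1 e2 μ := by
    have := hindep.indepFun (i := 1) (j := 2) (by decide)
    simpa using this
  -- main conditional independence of the pairs (B,e1), (B,e2)
  have hpair : CondIndepFun (MeasurableSpace.comap B inferInstance) hm' (fun ω => (B ω, e1 ω)) (fun ω => (B ω, e2 ω)) μ := by
    rw [condIndepFun_iff_condIndep]
    have hgen1 : MeasurableSpace.comap (fun ω => (B ω, e1 ω))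
        (Prod.instMeasurableSpace) = MeasurableSpace.generateFrom
          ((Set.preimage (fun ω => (B ω, e1 ω))) ''
            (Set.image2 (· ×ˢ ·) { s : Set ℝ | MeasurableSet s }
              { t : Set ℝ | MeasurableSet t })) := by
      rw [← generateFrom_prod, MeasurableSpace.comap_generateFrom]
    have hgen2 : MeasurableSpace.comap (fun ω => (B ω, e2 ω))
        (Prod.instMeasurableSpace) = MeasurableSpace.generateFrom
          ((Set.preimage (fun ω => (B ω, e2 ω))) ''
            (Set.image2 (· ×ˢ ·) { s : Set ℝ | MeasurableSet s }
              { t : Set ℝ | MeasurableSet t })) := by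
      rw [← generateFrom_prod, MeasurableSpace.comap_generateFrom]
    refine CondIndepSets.condIndep hP1.comap_le hP2.comap_le
      (isPiSystem_prod.comap _) (isPiSystem_prod.comap _) hgen1 hgen2 ?_
    rw [condIndepSets_iff]
    rotate_left
    · rintro t ⟨_, ⟨s, hs, u, hu, rfl⟩, rfl⟩
      simp only [Set.mem_setOf_eq] at hs hu
      exact (hs.prod hu).preimage hP1
    · rintro t ⟨_, ⟨s, hs, u, hu, rfl⟩, rfl⟩
      simp only [Set.mem_setOf_eq] at hs hu
      exact (hs.prod hu).preimage hP2
    rintro _ _ ⟨_, ⟨s, hs, u, hu, rfl⟩, rfl⟩ ⟨_, ⟨t, ht, v, hv, rfl⟩, rfl⟩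
    simp only [Set.mem_setOf_eq] at hs hu ht hv
    have hpre1 : (fun ω => (B ω, e1 ω)) ⁻¹' (s ×ˢ u) = B ⁻¹' s ∩ e1 ⁻¹' u :=
      Set.mk_preimage_prod B e1
    have hpre2 : (fun ω => (B ω, e2 ω)) ⁻¹' (t ×ˢ v) = B ⁻¹' t ∩ e2 ⁻¹' v :=
      Set.mk_preimage_prod B e2
    rw [hpre1, hpre2]
    -- rewrite the intersection
    have hset : (B ⁻¹' s ∩ e1 ⁻¹' u) ∩ (B ⁻¹' t ∩ e2 ⁻¹' v)
        = B ⁻¹' (s ∩ t) ∩ ((fun ω => (e1 ω, e2 ω)) ⁻¹' (u ×ˢ v)) := by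
      rw [Set.mk_preimage_prod e1 e2, Set.preimage_inter]
      ext ω; simp; tauto
    have h12 : (μ⟦(B ⁻¹' s ∩ e1 ⁻¹' u) ∩ (B ⁻¹' t ∩ e2 ⁻¹' v)  | MeasurableSpace.comap B inferInstance⟧)
        =ᵐ[μ] (B ⁻¹' (s ∩ t)).indicator
          (fun _ => (μ ((fun ω => (e1 ω, e2 ω)) ⁻¹' (u ×ˢ v))).toReal) := by
      rw [hset]
      exact condexp_indicator_inter_aux μ B (fun ω => (e1 ω, e2 ω)) hB
        (he1.prodMk he2) hind12B (hs.inter ht) (hu.prod hv)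
    have h1 := condexp_indicator_inter_aux μ B e1 hB he1 hind1 hs hu
    have hind2B : IndepFun e2 B μ := by
      have := hindep.indepFun (i := 2) (j := 0) (by decide)
      simpa using this
    have h2 := condexp_indicator_inter_aux μ B e2 hB he2 hind2B ht hv
    have hmul : μ ((fun ω => (e1 ω, e2 ω)) ⁻¹' (u ×ˢ v))
        = μ (e1 ⁻¹' u) * μ (e2 ⁻¹' v) := by
      rw [Set.mk_preimage_prod e1 e2]
      exact hind12.measure_inter_preimage_eq_mul u v hu hv
    filter_upwards [h12, h1, h2] with ω hω12 hω1 hω2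
    rw [Pi.mul_apply, hω12, hω1, hω2]
    by_cases h1m : ω ∈ B ⁻¹' s <;> by_cases h2m : ω ∈ B ⁻¹' t <;>
      simp [Set.indicator, h1m, h2m, hmul, ENNReal.toReal_mul]
  -- conclude by composing with measurable maps
  have hφ : Measurable (fun p : ℝ × ℝ => α * p.1 + p.2) := by measurability
  have hψ : Measurable (fun p : ℝ × ℝ => β * p.1 + p.2) := by measurability
  have := hpair.comp hφ hψ
  convert this using 1
  · rw [hA]; rfl
  · rw [hC]; rfl
end
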